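/- There exist real numbers λ, η with 0 < λ < η < 1 such that for every natural number K ≥ 1, Σ_{k=0}^{K−1} l(λ)_k ≤ Σ_{k=0}^{K−1} (1−η)·ηᵏ (equivalently, the partial sum is at most 1 − η^K). (By Nielsen's majorization criterion this shows that there exist squeezing parameters r < s such that two copies of a two-mode squeezed state with parameter r can be transformed by general local operations and classical communication into a single two-mode squeezed state with the strictly larger parameter s, tensored with a product state — a transformation impossible under local Gaussian operations; here λ = tanh²(r/2) and η = tanh²(s/2).) -/
import Mathlib


/-- `jIdx k` is the unique `j` with `j(j+1)/2 ≤ k < (j+1)(j+2)/2`. -/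
noncomputable def jIdx (k : ℕ) : ℕ :=
  Nat.find (⟨k, by
    have h2 : 2 * (k + 1) ≤ (k + 1) * (k + 2) := by nlinarith
    have h3 := Nat.div_le_div_right (c := 2) h2
    omega⟩ : ∃ j, k < (j + 1) * (j + 2) / 2)

/-- The ordered list of Schmidt coefficients of two copies of a two-mode squeezed state
with `λ = tanh²(r/2)`: the value `(1-λ)²·λʲ` occurs with multiplicity `j+1`. -/
noncomputable def schmidtTwoCopies (lam : ℝ) (k : ℕ) : ℝ := (1 - lam) ^ 2 * lam ^ jIdx k

lemma jex (k : ℕ) : ∃ j, k < (j + 1) * (j + 2) / 2 :=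
  ⟨k, by
    have h2 : 2 * (k + 1) ≤ (k + 1) * (k + 2) := by nlinarith
    have h3 := Nat.div_le_div_right (c := 2) h2
    omega⟩

lemma jIdx_eq_find (k : ℕ) : jIdx k = Nat.find (jex k) := rfl

lemma tri_succ (j : ℕ) : (j+1)*(j+2)/2 = j*(j+1)/2 + (j+1) := by
  have h1 : Even (j*(j+1)) := Nat.even_mul_succ_self j
  have h2 : (j+1)*(j+2) = j*(j+1) + 2*(j+1) := by ring
  have h3 := Nat.even_iff.mp h1
  omega

lemma jIdx_spec (k : ℕ) : k < (jIdx k + 1)*(jIdx k + 2)/2 := by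
  rw [jIdx_eq_find]; exact Nat.find_spec (jex k)

lemma jIdx_le {j k : ℕ} (h : k < (j+1)*(j+2)/2) : jIdx k ≤ j := by
  rw [jIdx_eq_find]; exact Nat.find_le h

lemma jIdx_lb {j k : ℕ} (h : j*(j+1)/2 ≤ k) : j ≤ jIdx k := by
  by_contra hc
  push_neg at hc
  have mono : (jIdx k + 1)*(jIdx k + 2)/2 ≤ j*(j+1)/2 :=
    Nat.div_le_div_right (Nat.mul_le_mul (by omega) (by omega))
  have := jIdx_spec k
  omega

lemma jIdx_eq {j k : ℕ} (h1 : j*(j+1)/2 ≤ k) (h2 : k < (j+1)*(j+2)/2) : jIdx k = j :=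
  le_antisymm (jIdx_le h2) (jIdx_lb h1)

lemma jIdx_lb' (k : ℕ) : (jIdx k)*(jIdx k + 1)/2 ≤ k := by
  by_contra hc
  push_neg at hc
  have h0 : jIdx k ≠ 0 := by intro h; rw [h] at hc; omega
  have hle : jIdx k ≤ jIdx k - 1 := jIdx_le (j := jIdx k - 1) (by
    have he : (jIdx k - 1 + 1) * (jIdx k - 1 + 2) = jIdx k * (jIdx k + 1) := by
      have e1 : jIdx k - 1 + 1 = jIdx k := by omega
      have e2 : jIdx k - 1 + 2 = jIdx k + 1 := by omega
      rw [e1, e2]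
    rw [he]; exact hc)
  omega

lemma sum_block (j : ℕ) :
    ∑ k ∈ Finset.range ((j+1)*(j+2)/2 - 1), schmidtTwoCopies (1/2) k
      = 1 - (j+4) * (1/2:ℝ)^(j+2) := by
  induction j with
  | zero => norm_num
  | succ j ih =>
    have e1 : j+1+1 = j+2 := by omega
    have e2 : j+1+2 = j+3 := by omega
    simp only [e1, e2]
    push_cast
    have h1 := tri_succ j
    have h2 : (j+2)*(j+3)/2 = (j+1)*(j+2)/2 + (j+2) := by
      have := tri_succ (j+1)
      rw [e1, e2] at this
      have e3 : (j+1)*(j+1+1) = (j+1)*(j+2) := by ring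
      rw [e3] at this
      exact this
    set N := (j+1)*(j+2)/2 - 1 with hNdef
    have hN : (j+2)*(j+3)/2 - 1 = N + (j+2) := by omega
    rw [hN, Finset.sum_range_add, ih]
    have hfirst : jIdx N = j := jIdx_eq (by omega) (by omega)
    have hrest : ∀ i ∈ Finset.range (j+1),
        schmidtTwoCopies (1/2) (N + (i+1)) = (1/2:ℝ)^2 * (1/2)^(j+1) := by
      intro i hi
      simp only [Finset.mem_range] at hi
      have hb1 : (j+1)*(j+1+1)/2 ≤ N + (i+1) := by
        have e3 : (j+1)*(j+1+1) = (j+1)*(j+2) := by ring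
        rw [e3]; omega
      have hb2 : N + (i+1) < (j+1+1)*(j+1+2)/2 := by
        have e3 : (j+1+1)*(j+1+2) = (j+2)*(j+3) := by ring
        rw [e3]; omega
      have hidx : jIdx (N + (i+1)) = j + 1 := jIdx_eq hb1 hb2
      unfold schmidtTwoCopies
      rw [hidx]
      norm_num
    rw [Finset.sum_range_succ']
    rw [Finset.sum_congr rfl hrest, Finset.sum_const]
    simp only [Nat.add_zero, hfirst, schmidtTwoCopies, nsmul_eq_mul, Finset.card_range]
    push_cast
    ring

lemma keyA (j : ℕ) (hj : 1 ≤ j) :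
    ((9:ℝ)/16)^(j*(j+1)/2) ≤ (j+4) * (1/2:ℝ)^(j+2) := by
  induction j, hj using Nat.le_induction with
  | base => norm_num
  | succ j hj ih =>
    have e3 : (j+1)*(j+1+1) = (j+1)*(j+2) := by ring
    have e4 : (j+1)*(j+1+1)/2 = j*(j+1)/2 + (j+1) := by rw [e3]; exact tri_succ j
    rw [e4, pow_add]
    push_cast
    have h1 : ((9:ℝ)/16)^(j+1) ≤ 1/2 := by
      calc ((9:ℝ)/16)^(j+1) ≤ ((9:ℝ)/16)^2 :=
            pow_le_pow_of_le_one (by norm_num) (by norm_num) (by omega)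
        _ ≤ 1/2 := by norm_num
    have h2 : (0:ℝ) ≤ ((9:ℝ)/16)^(j+1) := by positivity
    calc ((9:ℝ)/16)^(j*(j+1)/2) * ((9:ℝ)/16)^(j+1)
        ≤ ((j+4) * (1/2:ℝ)^(j+2)) * (1/2) := by
          apply mul_le_mul ih h1 h2 (by positivity)
      _ ≤ ((j:ℝ)+1+4) * (1/2:ℝ)^(j+1+2) := by
          have : ((j:ℝ)+4) * (1/2:ℝ)^(j+2) * (1/2) = ((j:ℝ)+4) * (1/2:ℝ)^(j+3) := by ring
          rw [this]
          have hp : (0:ℝ) ≤ (1/2:ℝ)^(j+3) := by positivity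
          have : ((j:ℝ)+4) ≤ ((j:ℝ)+1+4) := by linarith
          calc ((j:ℝ)+4) * (1/2:ℝ)^(j+3) ≤ ((j:ℝ)+1+4) * (1/2:ℝ)^(j+3) := by nlinarith
            _ = ((j:ℝ)+1+4) * (1/2:ℝ)^(j+1+2) := by ring_nf

/-- **Concentration of two-mode squeezing is possible under general LOCC.** There exist
`0 < λ < η < 1` such that every partial sum of the ordered Schmidt coefficients of two
copies of a two-mode squeezed state (parameter `λ`) is at most the corresponding partial
sum of the geometric Schmidt coefficients `(1-η)ηᵏ`; by Nielsen's criterion,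
`ρ_r ⊗ ρ_r → ρ_s ⊗ ρ_0` is then possible under LOCC although `r < s`. -/
theorem concentration_possible_LOCC :
    ∃ lam eta : ℝ, 0 < lam ∧ lam < eta ∧ eta < 1 ∧
      ∀ K : ℕ, 1 ≤ K →
        ∑ k ∈ Finset.range K, schmidtTwoCopies lam k ≤
          ∑ k ∈ Finset.range K, (1 - eta) * eta ^ k := by
  refine ⟨1/2, 9/16, by norm_num, by norm_num, by norm_num, ?_⟩
  intro K hK
  set j := jIdx K with hjdef
  have hub : K < (j+1)*(j+2)/2 := jIdx_spec K
  have hlb : j*(j+1)/2 ≤ K := jIdx_lb' K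
  have hj1 : 1 ≤ j := jIdx_lb (j := 1) (by omega)
  have hS : ∑ k ∈ Finset.range K, schmidtTwoCopies (1/2) k
      ≤ 1 - ((j:ℝ)+4)*(1/2:ℝ)^(j+2) := by
    rw [← sum_block j]
    apply Finset.sum_le_sum_of_subset_of_nonneg
    · exact Finset.range_subset_range.mpr (by omega)
    · intro i _ _
      unfold schmidtTwoCopies
      positivity
  have hgeom : ∑ k ∈ Finset.range K, (1 - (9:ℝ)/16) * ((9:ℝ)/16) ^ k
      = 1 - ((9:ℝ)/16)^K := by
    rw [← Finset.mul_sum, geom_sum_eq (by norm_num)]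
    field_simp
    ring
  rw [hgeom]
  have hA := keyA j hj1
  have hpow : ((9:ℝ)/16)^K ≤ ((9:ℝ)/16)^(j*(j+1)/2) :=
    pow_le_pow_of_le_one (by norm_num) (by norm_num) hlb
  linarith
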